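/- Let X be a compact topological space and ≿ a continuous, gapless preference on X whose indifference classes {y | y ∼ x} are all connected. Then every maximal domain of ≿ is connected. -/
import Mathlib


variable {X : Type*}

/-- A set on which the preference is complete. -/
def IsPrefDomain (r : X → X → Prop) (A : Set X) : Prop :=
  ∀ x ∈ A, ∀ y ∈ A, r x y ∨ r y x

/-- A maximal domain of comparability. -/
def IsMaxPrefDomain (r : X → X → Prop) (A : Set X) : Prop :=
  IsPrefDomain r A ∧ ∀ B : Set X, IsPrefDomain r B → A ⊆ B → B = A

/-- Strict preference. -/
def StrictPref (r : X → X → Prop) (x y : X) : Prop :=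
  r x y ∧ ¬ r y x

/-- Gapless preference. -/
def Gapless (r : X → X → Prop) : Prop :=
  ∀ x y, StrictPref r x y → ∃ z, StrictPref r x z ∧ StrictPref r z y

/-- Continuity: upper and lower sets are closed. -/
def ContinuousPref [TopologicalSpace X] (r : X → X → Prop) : Prop :=
  ∀ x : X, IsClosed {y | r y x} ∧ IsClosed {y | r x y}

/-- A nonempty closed subset of a compact space, totally preordered by a relation whose
lower sets are closed, has a greatest element. -/
lemma exists_greatest_aux [TopologicalSpace X] [CompactSpace X]
    (r : X → X → Prop) (hrefl : Reflexive r) (htrans : Transitive r)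
    (hcl : ∀ x : X, IsClosed {y | r y x})
    (S : Set X) (hScl : IsClosed S) (hne : S.Nonempty)
    (htot : ∀ x ∈ S, ∀ y ∈ S, r x y ∨ r y x) :
    ∃ m ∈ S, ∀ y ∈ S, r m y := by
  haveI : Nonempty S := hne.to_subtype
  set F : S → Set X := fun y => S ∩ {m | r m y} with hF
  have hFne : ∀ y : S, (F y).Nonempty := fun y => ⟨y, y.2, hrefl y⟩
  have hmono : ∀ (y z : S), r (y : X) z → F y ⊆ F z := by
    intro y z h m hm
    exact ⟨hm.1, htrans hm.2 h⟩
  have hdir : Directed (· ⊇ ·) F := by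
    intro y₁ y₂
    rcases htot y₁ y₁.2 y₂ y₂.2 with h | h
    · exact ⟨y₁, subset_rfl, hmono y₁ y₂ h⟩
    · exact ⟨y₂, hmono y₂ y₁ h, subset_rfl⟩
  have hclosed : ∀ y : S, IsClosed (F y) := fun y => hScl.inter (hcl y)
  have hcpt : ∀ y : S, IsCompact (F y) := fun y => (hclosed y).isCompact
  obtain ⟨m, hm⟩ :=
    IsCompact.nonempty_iInter_of_directed_nonempty_isCompact_isClosed F hdir hFne hcpt hclosed
  simp only [Set.mem_iInter] at hm
  obtain ⟨y0⟩ := (inferInstance : Nonempty S)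
  exact ⟨m, (hm y0).1, fun y hy => (hm ⟨y, hy⟩).2⟩

/-- The core argument: a maximal domain cannot be split into two closed pieces
with an element of the first weakly above an element of the second. -/
lemma core_aux [TopologicalSpace X] [CompactSpace X]
    (r : X → X → Prop)
    (hrefl : Reflexive r) (htrans : Transitive r)
    (hcont : ContinuousPref r) (hgap : Gapless r)
    (D : Set X) (hdom : IsPrefDomain r D)
    (hmax : ∀ B : Set X, IsPrefDomain r B → D ⊆ B → B = D)
    (A B : Set X) (hA : IsClosed A) (hB : IsClosed B)
    (hAD : A ⊆ D) (hBD : B ⊆ D) (hcov : D ⊆ A ∪ B)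
    (hsep : ∀ a ∈ A, ∀ b ∈ B, ¬ (r a b ∧ r b a))
    (a0 : X) (ha0 : a0 ∈ A) (b0 : X) (hb0 : b0 ∈ B) (h0 : r a0 b0) : False := by
  -- least element a* of A ∩ {x | r x b0}
  obtain ⟨a', ha'S, ha'least⟩ :=
    exists_greatest_aux (fun a b => r b a) hrefl (fun _ _ _ h₁ h₂ => htrans h₂ h₁)
      (fun x => (hcont x).2) (A ∩ {x | r x b0}) (hA.inter (hcont b0).1)
      ⟨a0, ha0, h0⟩
      (fun x hx y hy => (hdom x (hAD hx.1) y (hAD hy.1)).symm)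
  obtain ⟨ha'A, ha'b0⟩ := ha'S
  -- greatest element b* of B ∩ {x | r a' x}
  obtain ⟨b', hb'S, hb'great⟩ :=
    exists_greatest_aux r hrefl htrans (fun x => (hcont x).1)
      (B ∩ {x | r a' x}) (hB.inter (hcont a').2)
      ⟨b0, hb0, ha'b0⟩
      (fun x hx y hy => hdom x (hBD hx.1) y (hBD hy.1))
  obtain ⟨hb'B, ha'b'⟩ := hb'S
  have hstrict : StrictPref r a' b' :=
    ⟨ha'b', fun h => hsep a' ha'A b' hb'B ⟨ha'b', h⟩⟩
  -- no element of D is strictly between a' and b'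
  have hbetween : ∀ z ∈ D, ¬ (StrictPref r a' z ∧ StrictPref r z b') := by
    rintro z hz ⟨⟨haz, hza⟩, ⟨hzb, hbz⟩⟩
    rcases hcov hz with hzA | hzB
    · -- z ∈ A : r z b0 so a' least gives r z a'
      have hb'b0 : r b' b0 := hb'great b0 ⟨hb0, ha'b0⟩
      exact hza (ha'least z ⟨hzA, htrans hzb hb'b0⟩)
    · exact hbz (hb'great z ⟨hzB, haz⟩)
  obtain ⟨z, hz1, hz2⟩ := hgap a' b' hstrict
  -- z is comparable with everything in D
  have hcomp : ∀ d ∈ D, r d z ∨ r z d := by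
    intro d hd
    rcases hdom a' (hAD ha'A) d hd with had | hda
    · -- r a' d
      rcases hdom b' (hBD hb'B) d hd with hbd | hdb
      · exact Or.inr (htrans hz2.1 hbd)
      · -- r d b'
        by_cases hda' : r d a'
        · exact Or.inl (htrans hda' hz1.1)
        · by_cases hbd' : r b' d
          · exact Or.inr (htrans hz2.1 hbd')
          · exact absurd ⟨⟨had, hda'⟩, ⟨hdb, hbd'⟩⟩ (hbetween d hd)
    · exact Or.inl (htrans hda hz1.1)
  have hdomz : IsPrefDomain r (D ∪ {z}) := by
    rintro x (hx | hx) y (hy | hy)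
    · exact hdom x hx y hy
    · rcases hcomp x hx with h | h
      · exact Or.inl (hy ▸ h)
      · exact Or.inr (hy ▸ h)
    · rcases hcomp y hy with h | h
      · exact Or.inr (hx ▸ h)
      · exact Or.inl (hx ▸ h)
    · exact Or.inl (hx ▸ hy ▸ hrefl z)
  have hzD : z ∈ D := by
    have := hmax (D ∪ {z}) hdomz Set.subset_union_left
    rw [← this]; exact Or.inr rfl
  exact hbetween z hzD ⟨hz1, hz2⟩

theorem maxDomain_isConnected [TopologicalSpace X] [CompactSpace X] [Nonempty X]
    (r : X → X → Prop)
    (hrefl : Reflexive r) (htrans : Transitive r)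
    (hcont : ContinuousPref r) (hgap : Gapless r)
    (hind : ∀ x : X, IsConnected {y | r x y ∧ r y x})
    (D : Set X) (hD : IsMaxPrefDomain r D) :
    IsConnected D := by
  obtain ⟨hdom, hmax⟩ := hD
  -- D is nonempty
  have hne : D.Nonempty := by
    rcases Set.eq_empty_or_nonempty D with h | h
    · obtain ⟨x⟩ := (inferInstance : Nonempty X)
      have hx : IsPrefDomain r {x} := by
        intro a ha b hb
        rw [Set.mem_singleton_iff] at ha hb
        subst ha; subst hb; exact Or.inl (hrefl _)
      have := hmax {x} hx (h ▸ Set.empty_subset _)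
      rw [h] at this
      exact absurd this (by simp)
    · exact h
  -- D is saturated under indifference
  have hsat : ∀ x ∈ D, ∀ y, r x y → r y x → y ∈ D := by
    intro x hx y hxy hyx
    have hdomy : IsPrefDomain r (D ∪ {y}) := by
      rintro a (ha | ha) b (hb | hb)
      · exact hdom a ha b hb
      · subst hb
        rcases hdom a ha x hx with h | h
        · exact Or.inl (htrans h hxy)
        · exact Or.inr (htrans hyx h)
      · subst ha
        rcases hdom b hb x hx with h | h
        · exact Or.inr (htrans h hxy)
        · exact Or.inl (htrans hyx h)
      · exact Or.inl (ha ▸ hb ▸ hrefl y)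
    have := hmax (D ∪ {y}) hdomy Set.subset_union_left
    rw [← this]; exact Or.inr rfl
  -- D is closed
  have hDcl : IsClosed D := by
    have hcldom : IsPrefDomain r (closure D) := by
      intro x hx y hy
      by_contra hxy
      push_neg at hxy
      obtain ⟨hxy1, hxy2⟩ := hxy
      have hU : IsOpen ({w | r w y} ∪ {w | r y w})ᶜ :=
        (( hcont y).1.union (hcont y).2).isOpen_compl
      obtain ⟨d, hdU, hdD⟩ := mem_closure_iff.mp hx _ hU (by simp [hxy1, hxy2])
      simp only [Set.mem_compl_iff, Set.mem_union, Set.mem_setOf_eq, not_or] at hdU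
      obtain ⟨hdy, hyd⟩ := hdU
      have hV : IsOpen ({w | r w d} ∪ {w | r d w})ᶜ :=
        (( hcont d).1.union (hcont d).2).isOpen_compl
      obtain ⟨e, heV, heD⟩ := mem_closure_iff.mp hy _ hV (by simp [hdy, hyd])
      simp only [Set.mem_compl_iff, Set.mem_union, Set.mem_setOf_eq, not_or] at heV
      rcases hdom d hdD e heD with h | h
      · exact heV.2 h
      · exact heV.1 h
    have := hmax (closure D) hcldom subset_closure
    rw [← this]; exact isClosed_closure
  refine ⟨hne, ?_⟩
  by_contra hpc
  rw [IsPreconnected] at hpc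
  push_neg at hpc
  obtain ⟨u, v, hu, hv, hcov, ⟨x, hxD, hxu⟩, ⟨y, hyD, hyv⟩, hdisj⟩ := hpc
  set A : Set X := D \ v with hAdef
  set B : Set X := D \ u with hBdef
  have hAcl : IsClosed A := hDcl.sdiff hv
  have hBcl : IsClosed B := hDcl.sdiff hu
  have hAD : A ⊆ D := Set.diff_subset
  have hBD : B ⊆ D := Set.diff_subset
  have hcovAB : D ⊆ A ∪ B := by
    intro w hw
    rcases hcov hw with h | h
    · left; refine ⟨hw, fun hwv => ?_⟩
      have : w ∈ D ∩ (u ∩ v) := ⟨hw, h, hwv⟩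
      rw [hdisj] at this; exact this
    · by_cases hwu : w ∈ u
      · left; refine ⟨hw, fun hwv => ?_⟩
        have : w ∈ D ∩ (u ∩ v) := ⟨hw, hwu, hwv⟩
        rw [hdisj] at this; exact this
      · right; exact ⟨hw, hwu⟩
  have hxA : x ∈ A := by
    refine ⟨hxD, fun hxv => ?_⟩
    have : x ∈ D ∩ (u ∩ v) := ⟨hxD, hxu, hxv⟩
    rw [hdisj] at this; exact this
  have hyB : y ∈ B := by
    refine ⟨hyD, fun hyu => ?_⟩
    have : y ∈ D ∩ (u ∩ v) := ⟨hyD, hyu, hyv⟩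
    rw [hdisj] at this; exact this
  have hABdisj : ∀ w, w ∈ A → w ∈ B → False := by
    rintro w ⟨hwD, hwv⟩ ⟨-, hwu⟩
    rcases hcov hwD with h | h
    · exact hwu h
    · exact hwv h
  -- no indifference between A and B
  have hsep : ∀ a ∈ A, ∀ b ∈ B, ¬ (r a b ∧ r b a) := by
    rintro a ha b hb ⟨hab, hba⟩
    have hC : IsConnected {w | r a w ∧ r w a} := hind a
    have hCD : {w | r a w ∧ r w a} ⊆ D := fun w hw => hsat a (hAD ha) w hw.1 hw.2
    have := (isPreconnected_iff_subset_of_disjoint.mp hC.2) Bᶜ Aᶜ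
      hBcl.isOpen_compl hAcl.isOpen_compl
      (by
        intro w hw
        rcases hcovAB (hCD hw) with h | h
        · exact Or.inl (fun hwB => hABdisj w h hwB)
        · exact Or.inr (fun hwA => hABdisj w hwA h))
      (by
        ext w
        simp only [Set.mem_inter_iff, Set.mem_compl_iff, Set.mem_empty_iff_false, iff_false,
          not_and]
        intro hw hwB hwA
        rcases hcovAB (hCD hw) with h | h
        · exact hwA h
        · exact hwB h)
    rcases this with h | h
    · exact h ⟨hab, hba⟩ hb
    · exact h ⟨hrefl a, hrefl a⟩ ha
  rcases hdom x hxD y hyD with h | h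
  · exact core_aux r hrefl htrans hcont hgap D hdom hmax A B hAcl hBcl hAD hBD hcovAB hsep
      x hxA y hyB h
  · exact core_aux r hrefl htrans hcont hgap D hdom hmax B A hBcl hAcl hBD hAD
      (fun w hw => (hcovAB hw).symm)
      (fun b hb a ha hh => hsep a ha b hb ⟨hh.2, hh.1⟩)
      y hyB x hxA h
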